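/- arXiv:2510.26975 — 2 statements merged into one kernel-verified Lean document; each statement's English description precedes it below -/
import Mathlib

section
/- Let (G, T) be a graft with a connected minimum join F, let r ∈ V(G) be a vertex covered by F, and let K₀ be the connected component containing r of the subgraph of G induced on {x ∈ V(G) : dist(r, x) ≤ 0}. Then every edge of F has both endpoints in V(K₀); consequently T ⊆ V(K₀), and |V(K₀)| > 1. -/
open SimpleGraph
open scoped Classical

variable {V : Type*} [Fintype V] [DecidableEq V]

/-- `(G, T)` is a graft: every connected component of `G` contains an even number
of vertices of `T`. -/
def IsGraft (G : SimpleGraph V) (T : Set V) : Prop :=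
  ∀ v : V, Even {u ∈ T | G.Reachable v u}.ncard

/-- `F` is a join of `(G, T)`: `F ⊆ E(G)` and every vertex `v` is incident to an odd
number of edges of `F` exactly when `v ∈ T`. -/
def IsJoin (G : SimpleGraph V) (T : Set V) (F : Set (Sym2 V)) : Prop :=
  F ⊆ G.edgeSet ∧ ∀ v : V, (Odd {e ∈ F | v ∈ e}.ncard ↔ v ∈ T)

/-- `F` is a minimum join of `(G, T)`. -/
def IsMinJoin (G : SimpleGraph V) (T : Set V) (F : Set (Sym2 V)) : Prop :=
  IsJoin G T F ∧ ∀ F' : Set (Sym2 V), IsJoin G T F' → F.ncard ≤ F'.ncard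

/-- `F`-weight of an edge: `-1` if the edge is in `F`, `+1` otherwise. -/
noncomputable def ew (F : Set (Sym2 V)) (e : Sym2 V) : ℤ :=
  if e ∈ F then -1 else 1

/-- `F`-weight of a walk: the sum of the `F`-weights of its edges. -/
noncomputable def walkWeight {G : SimpleGraph V} {x y : V} (F : Set (Sym2 V))
    (p : G.Walk x y) : ℤ :=
  (p.edges.map (ew F)).sum

/-- `F`-distance between `x` and `y`: the minimum `F`-weight of a path between them. -/
noncomputable def distF (G : SimpleGraph V) (F : Set (Sym2 V)) (x y : V) : ℤ :=
  sInf {w : ℤ | ∃ p : G.Walk x y, p.IsPath ∧ walkWeight F p = w}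

/-- `F` covers the vertex `v`. -/
def Covers (F : Set (Sym2 V)) (v : V) : Prop := ∃ e ∈ F, v ∈ e

/-- The edge set `F` is nonempty and determines a connected subgraph. -/
def ConnectedEdgeSet (F : Set (Sym2 V)) : Prop :=
  F.Nonempty ∧ ∀ x y : V, Covers F x → Covers F y →
    (SimpleGraph.fromEdgeSet F).Reachable x y

/-- `e` has exactly one endpoint in `K`. -/
def Crossing (K : Set V) (e : Sym2 V) : Prop :=
  ∃ x y : V, e = s(x, y) ∧ x ∈ K ∧ y ∉ K

/-- The subgraph of `G` induced on `S` (viewed as a graph on the same vertex type). -/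
def sgRestrict (G : SimpleGraph V) (S : Set V) : SimpleGraph V where
  Adj x y := G.Adj x y ∧ x ∈ S ∧ y ∈ S
  symm := ⟨fun x y h => ⟨h.1.symm, h.2.2, h.2.1⟩⟩
  loopless := ⟨fun x h => G.loopless.irrefl x h.1⟩

/-- The subgraph of `G` induced on `S`, with all edges having both endpoints in `L` deleted. -/
def sgRestrictDel (G : SimpleGraph V) (S L : Set V) : SimpleGraph V where
  Adj x y := G.Adj x y ∧ x ∈ S ∧ y ∈ S ∧ ¬(x ∈ L ∧ y ∈ L)
  symm := ⟨fun x y h => ⟨h.1.symm, h.2.2.1, h.2.1, fun hc => h.2.2.2 ⟨hc.2, hc.1⟩⟩⟩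
  loopless := ⟨fun x h => G.loopless.irrefl x h.1⟩

/-- `K` is (the vertex set of) a connected component of the subgraph of `G` induced on `S`. -/
def IsCompOn (G : SimpleGraph V) (S K : Set V) : Prop :=
  ∃ v ∈ S, K = {u | (sgRestrict G S).Reachable v u}

/-! A path all of whose edges lie in `F` has `F`-weight minus its length, so every vertex that the
connected join `F` links to `r` lies at distance `≤ 0` from `r`, and the `F`-edges themselves then
connect these vertices to `r` inside `{x | dist(r, x) ≤ 0}`. Vertices of `T` have odd `F`-degree,
hence are covered by `F`, and both ends of any `F`-edge give two distinct vertices of `K₀`. -/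

lemma neg_length_le_walkWeight {G : SimpleGraph V} {x y : V} (F : Set (Sym2 V))
    (p : G.Walk x y) : -(p.length : ℤ) ≤ walkWeight F p := by
  have hew : ∀ e, -1 ≤ ew F e := fun e => by unfold ew; split_ifs <;> norm_num
  calc -(p.length : ℤ) = (p.edges.map fun _ => (-1 : ℤ)).sum := by
        simp [Walk.length_edges]
    _ ≤ walkWeight F p := List.sum_le_sum fun e _ => hew e

lemma walkWeight_eq_neg_length {G : SimpleGraph V} {x y : V} {F : Set (Sym2 V)}
    {p : G.Walk x y} (hp : ∀ e ∈ p.edges, e ∈ F) : walkWeight F p = -(p.length : ℤ) := by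
  have hew : ∀ e ∈ p.edges, ew F e = -1 := fun e he => if_pos (hp e he)
  simp [walkWeight, List.map_congr_left hew, Walk.length_edges]

lemma bddBelow_walkWeight_paths (G : SimpleGraph V) (F : Set (Sym2 V)) (x y : V) :
    BddBelow {w : ℤ | ∃ p : G.Walk x y, p.IsPath ∧ walkWeight F p = w} := by
  refine ⟨-(Fintype.card V : ℤ), ?_⟩
  rintro w ⟨p, hp, rfl⟩
  have hlen : p.length < Fintype.card V := hp.length_lt
  have := neg_length_le_walkWeight F p
  omega

lemma distF_le_walkWeight {G : SimpleGraph V} {x y : V} (F : Set (Sym2 V))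
    {p : G.Walk x y} (hp : p.IsPath) : distF G F x y ≤ walkWeight F p :=
  csInf_le (bddBelow_walkWeight_paths G F x y) ⟨p, hp, rfl⟩

lemma distF_nonpos_of_reachable {G : SimpleGraph V} {F : Set (Sym2 V)} (hFG : F ⊆ G.edgeSet)
    {x y : V} (h : (fromEdgeSet F).Reachable x y) : distF G F x y ≤ 0 := by
  obtain ⟨q⟩ := h
  have hle : fromEdgeSet F ≤ G := (fromEdgeSet_le G).2 fun e he => hFG he.1
  set p := (q.toPath : (fromEdgeSet F).Walk x y).mapLe hle
  have hpF : ∀ e ∈ p.edges, e ∈ F := by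
    intro e he
    rw [Walk.edges_mapLe_eq_edges] at he
    exact ((edgeSet_fromEdgeSet F ▸ Walk.edges_subset_edgeSet _ he) : e ∈ F \ _).1
  calc distF G F x y ≤ walkWeight F p :=
        distF_le_walkWeight F ((Walk.isPath_mapLe hle).2 q.toPath.2)
    _ = -(p.length : ℤ) := walkWeight_eq_neg_length hpF
    _ ≤ 0 := by omega

lemma fromEdgeSet_le_sgRestrict {G : SimpleGraph V} {F : Set (Sym2 V)} {S : Set V}
    (hFG : F ⊆ G.edgeSet) (hFS : ∀ e ∈ F, ∀ v ∈ e, v ∈ S) :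
    fromEdgeSet F ≤ sgRestrict G S := by
  intro a b hab
  rw [fromEdgeSet_adj] at hab
  exact ⟨hFG hab.1, hFS _ hab.1 a (Sym2.mem_mk_left a b), hFS _ hab.1 b (Sym2.mem_mk_right a b)⟩

lemma IsJoin.covers {G : SimpleGraph V} {T : Set V} {F : Set (Sym2 V)} (hF : IsJoin G T F)
    {t : V} (ht : t ∈ T) : Covers F t := by
  obtain ⟨e, he, hte⟩ := Set.nonempty_of_ncard_ne_zero ((hF.2 t).2 ht).pos.ne'
  exact ⟨e, he, hte⟩

theorem stmt_11_general (G : SimpleGraph V) (T : Set V)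
    (F : Set (Sym2 V)) (hF : IsMinJoin G T F) (hFc : ConnectedEdgeSet F)
    (r : V) (hr : Covers F r) (K₀ : Set V)
    (hK₀ : K₀ = {u | (sgRestrict G {x | distF G F r x ≤ 0}).Reachable r u}) :
    (∀ e ∈ F, ∀ v ∈ e, v ∈ K₀) ∧ T ⊆ K₀ ∧ 1 < K₀.ncard := by
  obtain ⟨hJoin, -⟩ := hF
  have hFG : F ⊆ G.edgeSet := hJoin.1
  have hreach : ∀ e ∈ F, ∀ v ∈ e, (fromEdgeSet F).Reachable r v :=
    fun e he v hv => hFc.2 r v hr ⟨e, he, hv⟩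
  have hFK₀ : ∀ e ∈ F, ∀ v ∈ e, v ∈ K₀ := by
    have hle := fromEdgeSet_le_sgRestrict hFG fun e he v hv =>
      distF_nonpos_of_reachable hFG (hreach e he v hv)
    intro e he v hv
    exact hK₀ ▸ (hreach e he v hv).mono hle
  refine ⟨hFK₀, fun t ht => ?_, ?_⟩
  · obtain ⟨e, he, hte⟩ := hJoin.covers ht
    exact hFK₀ e he t hte
  · obtain ⟨e, he⟩ := hFc.1
    induction e using Sym2.ind with
    | _ a b =>
      exact (Set.one_lt_ncard_iff K₀.toFinite).2 ⟨a, b, hFK₀ _ he a (Sym2.mem_mk_left a b),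
        hFK₀ _ he b (Sym2.mem_mk_right a b), (G.mem_edgeSet.1 (hFG he)).ne⟩

/-- let `(G, T)` be a graft with a connected minimum join `F` covering `r`,
and let `K₀` be the connected component of `r` in the subgraph of `G` induced on
`{x : dist(r, x) ≤ 0}`. Then every edge of `F` has both endpoints in `K₀`, hence
`T ⊆ K₀` and `|K₀| > 1`. -/
theorem stmt_11 (G : SimpleGraph V) (T : Set V) (hG : IsGraft G T)
    (F : Set (Sym2 V)) (hF : IsMinJoin G T F) (hFc : ConnectedEdgeSet F)
    (r : V) (hr : Covers F r) (K₀ : Set V)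
    (hK₀ : K₀ = {u | (sgRestrict G {x | distF G F r x ≤ 0}).Reachable r u}) :
    (∀ e ∈ F, ∀ v ∈ e, v ∈ K₀) ∧ T ⊆ K₀ ∧ 1 < K₀.ncard :=
  stmt_11_general G T F hF hFc r hr K₀ hK₀
end

section
/- Let (G, T) be a connected graft with T ≠ ∅, let r ∈ V(G), and let K₀ be the connected component containing r of the subgraph of G induced on L(0) = {x ∈ V(G) : dist(r, x) ≤ 0}. If T ⊆ V(K₀), then the subgraph of G induced on L(0) is connected (and hence equals K₀). -/
open SimpleGraph
open scoped Classical

variable {V : Type*} [Fintype V] [DecidableEq V]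

/-- `ν(G, T)`: the number of edges of a minimum join of `(G, T)`. -/
noncomputable def nu (G : SimpleGraph V) (T : Set V) : ℕ :=
  sInf {n : ℕ | ∃ F : Set (Sym2 V), IsJoin G T F ∧ F.ncard = n}

/-- `dist_{(G, T)}(x, y)`: the `F`-distance between `x` and `y` for a minimum join `F`
of `(G, T)` (a value independent of the choice of the minimum join `F`). -/
noncomputable def graftDist (G : SimpleGraph V) (T : Set V) (x y : V) : ℤ :=
  sInf {d : ℤ | ∃ F : Set (Sym2 V), IsMinJoin G T F ∧ distF G F x y = d}


/-!
Fix a minimum join `F` and write `d = distF G F r`. Minimality says that `F ∆ S` is never a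
smaller join, i.e. every edge set `S` with all degrees even has nonnegative `F`-weight. An edge
set whose odd vertices are `u, v` contains a `u`–`v` path and the rest of it is even, so its
weight is at least `distF G F u v`. Applied to `F ∆ (F' ∆ P)` for a shortest `F'`-path `P` this
shows that the distance does not depend on the minimum join; applied to a trail it bounds the
distance by the weight of the trail.

Call `v` stray if `d v ≤ 0` but `v ∉ K₀`; a stray vertex is not in `T ⊆ K₀`, so its
`F`-degree is even. If an `F`-edge `zv` enters a stray `v` with `d v ≤ d z`, every shortest
path to `v` ends with `zv`, and a second `F`-edge `vv'` at `v` then enters a stray `v'` with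
`d v' < d v`: this cannot go on forever. Following `F` from a stray vertex to `T` produces such
an edge, so no stray vertex is covered by `F`. But then the last edge of a shortest path to a
stray vertex `x` is not in `F`, and its other end is stray with smaller `d`.
-/

open scoped symmDiff

theorem Set.ncard_symmDiff_add_two_mul_ncard_inter {α : Type*} [Finite α] (A B : Set α) :
    (A ∆ B).ncard + 2 * (A ∩ B).ncard = A.ncard + B.ncard := by
  have hA := Set.ncard_inter_add_ncard_sdiff_eq_ncard A B
  have hB := Set.ncard_inter_add_ncard_sdiff_eq_ncard B A
  rw [Set.inter_comm] at hB
  rw [Set.symmDiff_def, Set.ncard_union_eq disjoint_sdiff_sdiff]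
  omega

def oddVerts (S : Set (Sym2 V)) : Set V := {v | Odd {e ∈ S | v ∈ e}.ncard}

theorem isJoin_iff {G : SimpleGraph V} {T : Set V} {F : Set (Sym2 V)} :
    IsJoin G T F ↔ F ⊆ G.edgeSet ∧ oddVerts F = T := by
  simp only [IsJoin, Set.ext_iff, oddVerts, Set.mem_ofPred_eq]

theorem oddVerts_symmDiff (S S' : Set (Sym2 V)) :
    oddVerts (S ∆ S') = oddVerts S ∆ oddVerts S' := by
  ext v
  have hsplit : {e ∈ S ∆ S' | v ∈ e} = {e ∈ S | v ∈ e} ∆ {e ∈ S' | v ∈ e} := by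
    ext e; simp only [Set.mem_symmDiff, Set.mem_ofPred_eq]; tauto
  have := Set.ncard_symmDiff_add_two_mul_ncard_inter {e ∈ S | v ∈ e} {e ∈ S' | v ∈ e}
  rw [Set.mem_symmDiff]
  change Odd {e ∈ S ∆ S' | v ∈ e}.ncard ↔
    Odd {e ∈ S | v ∈ e}.ncard ∧ ¬Odd {e ∈ S' | v ∈ e}.ncard ∨
      Odd {e ∈ S' | v ∈ e}.ncard ∧ ¬Odd {e ∈ S | v ∈ e}.ncard
  rw [hsplit]
  simp only [Nat.odd_iff]
  omega

theorem oddVerts_singleton {a b : V} (hab : a ≠ b) : oddVerts {s(a, b)} = {a} ∆ {b} := by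
  ext v
  change Odd {e ∈ ({s(a, b)} : Set (Sym2 V)) | v ∈ e}.ncard ↔ _
  by_cases hv : v ∈ s(a, b)
  · have : {e ∈ ({s(a, b)} : Set (Sym2 V)) | v ∈ e} = {s(a, b)} :=
      Set.ext fun e => ⟨fun h => h.1, by rintro rfl; exact ⟨rfl, hv⟩⟩
    rw [this, Set.ncard_singleton]
    rcases Sym2.mem_iff.mp hv with rfl | rfl <;> simp [Set.mem_symmDiff, hab, hab.symm]
  · have : {e ∈ ({s(a, b)} : Set (Sym2 V)) | v ∈ e} = ∅ :=
      Set.eq_empty_of_forall_notMem fun e ⟨he, hve⟩ => hv (Set.mem_singleton_iff.mp he ▸ hve)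
    rw [this, Set.ncard_empty]
    simp_all [Set.mem_symmDiff]

theorem SimpleGraph.Walk.IsTrail.oddVerts_edgeSet {G : SimpleGraph V} {u v : V}
    {p : G.Walk u v} (hp : p.IsTrail) : oddVerts p.edgeSet = {u} ∆ {v} := by
  induction p with
  | nil => simp [oddVerts]
  | @cons u w v h q ih =>
    rw [isTrail_cons] at hp
    have hdisj : Disjoint {s(u, w)} q.edgeSet := Set.disjoint_singleton_left.mpr hp.2
    have hunion : {s(u, w)} ∪ q.edgeSet = {s(u, w)} ∆ q.edgeSet := hdisj.symmDiff_eq_sup.symm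
    rw [edgeSet_cons, Set.insert_eq, hunion, oddVerts_symmDiff,
      oddVerts_singleton h.ne, ih hp.1, symmDiff_assoc, symmDiff_symmDiff_cancel_left]

theorem exists_walk_of_oddVerts_eq {G : SimpleGraph V} {S : Set (Sym2 V)} {u v : V}
    (hfin : S.Finite) (hS : S ⊆ G.edgeSet) (hodd : oddVerts S = {u} ∆ {v}) :
    ∃ p : G.Walk u v, p.edgeSet ⊆ S := by
  by_cases huv : u = v
  · subst huv
    exact ⟨Walk.nil, by simp⟩
  have hu : u ∈ oddVerts S := by simp [hodd, Set.mem_symmDiff, huv]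
  obtain ⟨e, heS, hue⟩ := Set.nonempty_of_ncard_ne_zero (Odd.pos hu).ne'
  obtain ⟨b, rfl⟩ := Sym2.mem_iff_exists.mp hue
  have hadj : G.Adj u b := hS heS
  have hsub : {s(u, b)} ⊆ S := Set.singleton_subset_iff.mpr heS
  have hodd' : oddVerts (S \ {s(u, b)}) = {b} ∆ {v} := by
    rw [← symmDiff_of_ge hsub, oddVerts_symmDiff, hodd, oddVerts_singleton hadj.ne,
      symmDiff_symmDiff_symmDiff_comm, symmDiff_self, bot_symmDiff, symmDiff_comm]
  obtain ⟨q, hq⟩ := exists_walk_of_oddVerts_eq hfin.sdiff (Set.sdiff_subset.trans hS) hodd'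
  refine ⟨Walk.cons hadj q, ?_⟩
  rw [Walk.edgeSet_cons]
  exact Set.insert_subset heS (hq.trans Set.sdiff_subset)
termination_by S.ncard
decreasing_by exact Set.ncard_sdiff_singleton_lt_of_mem heS hfin

/-- The `F`-weight `∑ e ∈ S, ew F e` of an edge set `S`. -/
noncomputable def setWeight (F S : Set (Sym2 V)) : ℤ := S.ncard - 2 * (S ∩ F).ncard

theorem ncard_symmDiff_eq_add_setWeight (F S : Set (Sym2 V)) :
    ((F ∆ S).ncard : ℤ) = F.ncard + setWeight F S := by
  have := Set.ncard_symmDiff_add_two_mul_ncard_inter F S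
  rw [setWeight, Set.inter_comm]
  omega

theorem setWeight_insert {F S : Set (Sym2 V)} {e : Sym2 V} (he : e ∉ S) :
    setWeight F (insert e S) = ew F e + setWeight F S := by
  unfold setWeight ew
  rw [Set.ncard_insert_of_notMem he]
  split_ifs with heF
  · rw [Set.insert_inter_of_mem heF, Set.ncard_insert_of_notMem fun h => he h.1]
    push_cast
    ring
  · rw [Set.insert_inter_of_notMem heF]
    push_cast
    ring

theorem setWeight_eq_add_sdiff {F P S : Set (Sym2 V)} (h : P ⊆ S) :
    setWeight F S = setWeight F P + setWeight F (S \ P) := by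
  have h1 := Set.ncard_sdiff_add_ncard_of_subset h
  have h2 := Set.ncard_sdiff_add_ncard_of_subset (Set.inter_subset_inter_left F h)
  have h3 : (S \ P) ∩ F = (S ∩ F) \ (P ∩ F) := by
    ext e; simp only [Set.mem_inter_iff, Set.mem_sdiff]; tauto
  rw [← h3] at h2
  unfold setWeight
  omega

theorem IsMinJoin.setWeight_nonneg {G : SimpleGraph V} {T : Set V} {F S : Set (Sym2 V)}
    (hF : IsMinJoin G T F) (hS : S ⊆ G.edgeSet) (hodd : oddVerts S = ∅) :
    0 ≤ setWeight F S := by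
  obtain ⟨hFE, hFT⟩ := isJoin_iff.mp hF.1
  have hjoin : IsJoin G T (F ∆ S) := by
    refine isJoin_iff.mpr ⟨?_, by rw [oddVerts_symmDiff, hFT, hodd]; exact symmDiff_bot T⟩
    exact symmDiff_le_sup.trans (Set.union_subset hFE hS)
  have := ncard_symmDiff_eq_add_setWeight F S
  have := hF.2 _ hjoin
  omega

namespace SimpleGraph.Walk

variable {G : SimpleGraph V} {F : Set (Sym2 V)}

theorem IsTrail.walkWeight_eq_setWeight {u v : V} {p : G.Walk u v} (hp : p.IsTrail) :
    walkWeight F p = setWeight F p.edgeSet := by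
  induction p with
  | nil => simp [walkWeight, setWeight]
  | cons h q ih =>
    rw [isTrail_cons] at hp
    rw [edgeSet_cons, setWeight_insert hp.2, ← ih hp.1]
    simp [walkWeight]

theorem walkWeight_concat {u v w : V} (p : G.Walk u v) (h : G.Adj v w) :
    walkWeight F (p.concat h) = walkWeight F p + ew F s(v, w) := by
  simp [walkWeight, edges_concat]

theorem IsTrail.concat {u v w : V} {p : G.Walk u v} (hp : p.IsTrail) (h : G.Adj v w)
    (he : s(v, w) ∉ p.edges) : (p.concat h).IsTrail := by
  rw [← reverse_isTrail_iff, reverse_concat, isTrail_cons, edges_reverse, List.mem_reverse,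
    Sym2.eq_swap]
  exact ⟨hp.reverse, he⟩

theorem neg_length_le_walkWeight {u v : V} (p : G.Walk u v) :
    -(p.length : ℤ) ≤ walkWeight F p := by
  induction p with
  | nil => simp [walkWeight]
  | @cons a b c h q ih =>
    have : -1 ≤ ew F s(a, b) := by unfold ew; split_ifs <;> norm_num
    simp only [walkWeight, edges_cons, List.map_cons, List.sum_cons, length_cons] at ih ⊢
    push_cast
    omega

theorem IsPath.eq_of_mem_edges_of_end_mem {u v : V} {p : G.Walk u v} (hp : p.IsPath)
    {e : Sym2 V} (he : e ∈ p.edges) (hv : v ∈ e) : e = s(p.penultimate, v) := by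
  have hnil : ¬p.Nil := fun h => by simp [edges_eq_nil.mpr h] at he
  have hsplit := concat_dropLast (adj_penultimate hnil)
  rw [← hsplit, edges_concat, List.concat_eq_append, List.mem_append, List.mem_singleton] at he
  refine he.resolve_left fun he' => ?_
  have hnd := hp.support_nodup
  rw [← hsplit, support_concat, List.nodup_append] at hnd
  exact hnd.2.2 _ (p.dropLast.mem_support_of_mem_edges he' hv) _ (List.mem_singleton_self v) rfl

end SimpleGraph.Walk

section distF

variable {G : SimpleGraph V} {T : Set V} {F : Set (Sym2 V)}

theorem bddBelow_walkWeight_isPath (u v : V) :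
    BddBelow {w : ℤ | ∃ p : G.Walk u v, p.IsPath ∧ walkWeight F p = w} := by
  refine ⟨-(Fintype.card V : ℤ), ?_⟩
  rintro w ⟨p, hp, rfl⟩
  have := hp.length_lt
  have := p.neg_length_le_walkWeight (F := F)
  omega

theorem distF_le_walkWeight_of_isPath {u v : V} {p : G.Walk u v} (hp : p.IsPath) :
    distF G F u v ≤ walkWeight F p :=
  csInf_le (bddBelow_walkWeight_isPath u v) ⟨p, hp, rfl⟩

theorem exists_isPath_walkWeight_eq_distF {u v : V} (h : G.Reachable u v) :
    ∃ p : G.Walk u v, p.IsPath ∧ walkWeight F p = distF G F u v := by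
  obtain ⟨p⟩ := h
  exact Int.csInf_mem (s := {w : ℤ | ∃ p : G.Walk u v, p.IsPath ∧ walkWeight F p = w})
    ⟨_, p.bypass, p.bypass_isPath, rfl⟩ (bddBelow_walkWeight_isPath u v)

theorem distF_self (u : V) : distF G F u u = 0 := by
  refine le_antisymm (distF_le_walkWeight_of_isPath (p := .nil) .nil) ?_
  obtain ⟨p, hp, hw⟩ := exists_isPath_walkWeight_eq_distF (F := F) (Reachable.refl (G := G) u)
  obtain rfl := Walk.eq_nil_iff_nil.mpr (Walk.isPath_iff_nil.mp hp)
  simp [← hw, walkWeight]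

namespace IsMinJoin

variable (hF : IsMinJoin G T F)
include hF

theorem distF_le_setWeight {S : Set (Sym2 V)} {u v : V} (hS : S ⊆ G.edgeSet)
    (hodd : oddVerts S = {u} ∆ {v}) : distF G F u v ≤ setWeight F S := by
  obtain ⟨q, hq⟩ := exists_walk_of_oddVerts_eq (Set.toFinite S) hS hodd
  set p := q.bypass
  have hp : p.IsPath := q.bypass_isPath
  have hpS : p.edgeSet ⊆ S := fun e he => hq (q.edges_bypass_subset_edges he)
  have hrest : oddVerts (S \ p.edgeSet) = ∅ := by
    rw [← symmDiff_of_ge hpS, oddVerts_symmDiff, hodd, hp.isTrail.oddVerts_edgeSet,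
      symmDiff_self]
    rfl
  have := hF.setWeight_nonneg (Set.sdiff_subset.trans hS) hrest
  rw [setWeight_eq_add_sdiff hpS, ← hp.isTrail.walkWeight_eq_setWeight]
  have := distF_le_walkWeight_of_isPath (F := F) hp
  omega

theorem distF_le_walkWeight {u v : V} {p : G.Walk u v} (hp : p.IsTrail) :
    distF G F u v ≤ walkWeight F p := by
  rw [hp.walkWeight_eq_setWeight]
  exact hF.distF_le_setWeight (fun _ he => p.edges_subset_edgeSet he) hp.oddVerts_edgeSet

theorem distF_le_of_isMinJoin {F' : Set (Sym2 V)} (hF' : IsMinJoin G T F') {u v : V}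
    (h : G.Reachable u v) : distF G F u v ≤ distF G F' u v := by
  obtain ⟨p, hp, hw⟩ := exists_isPath_walkWeight_eq_distF (F := F') h
  set S := F ∆ (F' ∆ p.edgeSet)
  have hS : S ⊆ G.edgeSet :=
    symmDiff_le_sup.trans <| Set.union_subset hF.1.1 <| symmDiff_le_sup.trans <|
      Set.union_subset hF'.1.1 fun _ he => p.edges_subset_edgeSet he
  have hodd : oddVerts S = {u} ∆ {v} := by
    rw [oddVerts_symmDiff, oddVerts_symmDiff, (isJoin_iff.mp hF.1).2, (isJoin_iff.mp hF'.1).2,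
      hp.isTrail.oddVerts_edgeSet, symmDiff_symmDiff_cancel_left]
  -- `F ∆ S = F' ∆ p.edgeSet`, and `|F| = |F'|`, so `setWeight F S = setWeight F' p.edgeSet`.
  have hcard : F.ncard = F'.ncard := le_antisymm (hF.2 _ hF'.1) (hF'.2 _ hF.1)
  have h1 := ncard_symmDiff_eq_add_setWeight F S
  have h2 := ncard_symmDiff_eq_add_setWeight F' p.edgeSet
  rw [symmDiff_symmDiff_cancel_left] at h1
  rw [← hw, hp.isTrail.walkWeight_eq_setWeight]
  have := hF.distF_le_setWeight hS hodd
  omega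

theorem graftDist_eq (hc : G.Connected) (u v : V) : graftDist G T u v = distF G F u v := by
  have : {d : ℤ | ∃ F' : Set (Sym2 V), IsMinJoin G T F' ∧ distF G F' u v = d} =
      {distF G F u v} := by
    ext d
    constructor
    · rintro ⟨F', hF', rfl⟩
      exact le_antisymm (hF'.distF_le_of_isMinJoin hF (hc u v))
        (hF.distF_le_of_isMinJoin hF' (hc u v))
    · rintro rfl
      exact ⟨F, hF, rfl⟩
  rw [graftDist, this, csInf_singleton]

end IsMinJoin

theorem graftDist_eq_zero_of_forall_not_isMinJoin (h : ∀ F, ¬IsMinJoin G T F) (u v : V) :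
    graftDist G T u v = 0 := by
  have : {d : ℤ | ∃ F : Set (Sym2 V), IsMinJoin G T F ∧ distF G F u v = d} = ∅ :=
    Set.eq_empty_of_forall_notMem fun d ⟨F, hF, _⟩ => h F hF
  rw [graftDist, this, Int.csInf_empty]

end distF

theorem reachable_sgRestrict_of_adj {G : SimpleGraph V} {S : Set V} {a b : V} (h : G.Adj a b)
    (ha : a ∈ S) (hb : b ∈ S) : (sgRestrict G S).Reachable a b :=
  SimpleGraph.Adj.reachable (G := sgRestrict G S) ⟨h, ha, hb⟩

theorem mem_of_reachable_sgRestrict {G : SimpleGraph V} {S : Set V} {a b : V}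
    (h : (sgRestrict G S).Reachable a b) (ha : a ∈ S) : b ∈ S := by
  obtain ⟨p⟩ := h
  induction p with
  | nil => exact ha
  | cons hadj _ ih => exact ih hadj.2.2

namespace IsMinJoin

variable {G : SimpleGraph V} {T : Set V} {F : Set (Sym2 V)} (hF : IsMinJoin G T F)
include hF

theorem exists_mem_reachable_of_covers {u : V} (hu : Covers F u) :
    ∃ t ∈ T, (fromEdgeSet F).Reachable u t := by
  by_contra! hno
  set R := {w | (fromEdgeSet F).Reachable u w}
  have hclosed : ∀ e ∈ F, ∀ w ∈ e, w ∈ R → ∀ w' ∈ e, w' ∈ R := by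
    intro e he w hw hwR w' hw'
    obtain ⟨y, rfl⟩ := Sym2.mem_iff_exists.mp hw
    rcases Sym2.mem_iff.mp hw' with rfl | rfl
    · exact hwR
    · exact hwR.trans (Adj.reachable ((fromEdgeSet_adj F).mpr ⟨he, (hF.1.1 he).ne⟩))
  -- the `F`-edges of the `F`-component of `u` form a nonempty even set of negative weight
  set S := {e ∈ F | ∀ w ∈ e, w ∈ R}
  have hSF : S ⊆ F := fun e he => he.1
  have hodd : oddVerts S = ∅ := by
    refine Set.eq_empty_of_forall_notMem fun w hw => ?_
    by_cases hwR : w ∈ R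
    · have : {e ∈ S | w ∈ e} = {e ∈ F | w ∈ e} :=
        Set.ext fun e =>
          ⟨fun h => ⟨h.1.1, h.2⟩, fun h => ⟨⟨h.1, hclosed e h.1 w h.2 hwR⟩, h.2⟩⟩
      exact hno w ((hF.1.2 w).mp (this ▸ hw)) hwR
    · have : {e ∈ S | w ∈ e} = ∅ :=
        Set.eq_empty_of_forall_notMem fun e he => hwR (he.1.2 w he.2)
      have hw' : Odd {e ∈ S | w ∈ e}.ncard := hw
      rw [this, Set.ncard_empty] at hw'
      exact Nat.not_odd_zero hw'
  obtain ⟨e, he, hue⟩ := hu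
  have hS : S.Nonempty := ⟨e, he, fun w hw => hclosed e he u hue Reachable.rfl w hw⟩
  have := hF.setWeight_nonneg (hSF.trans hF.1.1) hodd
  rw [setWeight, Set.inter_eq_left.mpr hSF] at this
  have := (Set.ncard_pos (Set.toFinite S)).mpr hS
  omega

variable {r : V}

theorem mem_edges_of_distF_le {z a : V} (hza : s(z, a) ∈ F)
    (hd : distF G F r a ≤ distF G F r z) {p : G.Walk r a} (hp : p.IsPath)
    (hw : walkWeight F p = distF G F r a) : s(z, a) ∈ p.edges := by
  by_contra hnot
  have hadj : G.Adj a z := (hF.1.1 hza).symm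
  have := hF.distF_le_walkWeight (hp.isTrail.concat hadj (by rwa [Sym2.eq_swap]))
  rw [Walk.walkWeight_concat, hw, ew, if_pos (by rwa [Sym2.eq_swap])] at this
  omega

variable (hc : G.Connected)
  (hT : ∀ t ∈ T, (sgRestrict G {z | distF G F r z ≤ 0}).Reachable r t)
include hc hT

theorem exists_descent {z v : V} (hzv : s(z, v) ∈ F) (hd : distF G F r v ≤ distF G F r z)
    (hv : distF G F r v ≤ 0) (hvK : ¬(sgRestrict G {z | distF G F r z ≤ 0}).Reachable r v) :
    ∃ v', s(v, v') ∈ F ∧ distF G F r v' < distF G F r v ∧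
      ¬(sgRestrict G {z | distF G F r z ≤ 0}).Reachable r v' := by
  have hvT : v ∉ T := fun hvT => hvK (hT v hvT)
  have hdeg : Even {e ∈ F | v ∈ e}.ncard :=
    Nat.not_odd_iff_even.mp fun h => hvT ((hF.1.2 v).mp h)
  have hpos : 0 < {e ∈ F | v ∈ e}.ncard :=
    (Set.ncard_pos (Set.toFinite _)).mpr ⟨s(z, v), hzv, Sym2.mem_mk_right z v⟩
  have hone : 1 < {e ∈ F | v ∈ e}.ncard := by rcases hdeg with ⟨k, hk⟩; omega
  obtain ⟨f, ⟨hfF, hvf⟩, hf⟩ := Set.exists_ne_of_one_lt_ncard hone s(z, v)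
  obtain ⟨v', rfl⟩ := Sym2.mem_iff_exists.mp hvf
  have hadj : G.Adj v v' := hF.1.1 hfF
  obtain ⟨p, hp, hw⟩ := exists_isPath_walkWeight_eq_distF (F := F) (hc r v)
  have hzv_last := hp.eq_of_mem_edges_of_end_mem (hF.mem_edges_of_distF_le hzv hd hp hw)
    (Sym2.mem_mk_right z v)
  have hf_mem : s(v, v') ∉ p.edges := fun h =>
    hf ((hp.eq_of_mem_edges_of_end_mem h (Sym2.mem_mk_left v v')).trans hzv_last.symm)
  have hlt : distF G F r v' < distF G F r v := by
    have := hF.distF_le_walkWeight (hp.isTrail.concat hadj hf_mem)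
    rw [Walk.walkWeight_concat, hw, ew, if_pos hfF] at this
    omega
  refine ⟨v', hfF, hlt, fun hv'K => hvK (hv'K.trans ?_)⟩
  exact reachable_sgRestrict_of_adj hadj.symm (show distF G F r v' ≤ 0 by omega) hv

theorem reachable_of_mem_of_distF_le {z v : V} (hzv : s(z, v) ∈ F)
    (hd : distF G F r v ≤ distF G F r z) (hv : distF G F r v ≤ 0) :
    (sgRestrict G {z | distF G F r z ≤ 0}).Reachable r v := by
  by_contra hvK
  obtain ⟨v₀, ⟨hv₀, hv₀K, z₀, hz₀, hd₀⟩, hmin⟩ := Set.exists_min_image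
    {v | distF G F r v ≤ 0 ∧ ¬(sgRestrict G {z | distF G F r z ≤ 0}).Reachable r v ∧
      ∃ z, s(z, v) ∈ F ∧ distF G F r v ≤ distF G F r z}
    (distF G F r) (Set.toFinite _) ⟨v, hv, hvK, z, hzv, hd⟩
  obtain ⟨v', hv'F, hlt, hv'K⟩ := hF.exists_descent hc hT hz₀ hd₀ hv₀ hv₀K
  have := hmin v' ⟨by omega, hv'K, v₀, hv'F, hlt.le⟩
  omega

theorem reachable_of_covers {u : V} (hu : Covers F u) (hu0 : distF G F r u ≤ 0) :
    (sgRestrict G {z | distF G F r z ≤ 0}).Reachable r u := by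
  obtain ⟨t, ht, ⟨w⟩⟩ := hF.exists_mem_reachable_of_covers hu
  clear hu
  induction w with
  | nil => exact hT _ ht
  | @cons a m _ h _ ih =>
    have hamF : s(a, m) ∈ F := ((fromEdgeSet_adj F).mp h).1
    by_cases hm : distF G F r m ≤ 0
    · exact (ih hm ht).trans (reachable_sgRestrict_of_adj (hF.1.1 hamF).symm hm hu0)
    · exact hF.reachable_of_mem_of_distF_le hc hT (Sym2.eq_swap ▸ hamF) (by omega) hu0

theorem reachable_of_distF_nonpos {x : V} (hx : distF G F r x ≤ 0) :
    (sgRestrict G {z | distF G F r z ≤ 0}).Reachable r x := by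
  by_contra hxK
  obtain ⟨x₀, ⟨hx₀, hx₀K⟩, hmin⟩ := Set.exists_min_image
    {x | distF G F r x ≤ 0 ∧ ¬(sgRestrict G {z | distF G F r z ≤ 0}).Reachable r x}
    (distF G F r) (Set.toFinite _) ⟨x, hx, hxK⟩
  obtain ⟨p, hp, hw⟩ := exists_isPath_walkWeight_eq_distF (F := F) (hc r x₀)
  have hnil : ¬p.Nil := fun h => hx₀K (h.eq ▸ Reachable.rfl)
  have hadj : G.Adj p.penultimate x₀ := p.adj_penultimate hnil
  have hlast : s(p.penultimate, x₀) ∉ F := fun h =>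
    hx₀K (hF.reachable_of_covers hc hT ⟨_, h, Sym2.mem_mk_right _ _⟩ hx₀)
  have hlt : distF G F r p.penultimate < distF G F r x₀ := by
    have := distF_le_walkWeight_of_isPath (F := F) hp.dropLast
    rw [← Walk.concat_dropLast hadj, Walk.walkWeight_concat, ew, if_neg hlast] at hw
    omega
  refine not_le.mpr hlt (hmin _ ⟨by omega, fun hK => hx₀K (hK.trans ?_)⟩)
  exact reachable_sgRestrict_of_adj hadj (show distF G F r p.penultimate ≤ 0 by omega) hx₀

end IsMinJoin

theorem reachable_sgRestrict_iff_graftDist_nonpos {G : SimpleGraph V} {T : Set V} {r : V}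
    (hc : G.Connected)
    (hT : ∀ t ∈ T, (sgRestrict G {z | graftDist G T r z ≤ 0}).Reachable r t) (x : V) :
    (sgRestrict G {z | graftDist G T r z ≤ 0}).Reachable r x ↔ graftDist G T r x ≤ 0 := by
  by_cases hex : ∃ F, IsMinJoin G T F
  · obtain ⟨F, hF⟩ := hex
    simp_rw [hF.graftDist_eq hc] at hT ⊢
    refine ⟨fun h => ?_, hF.reachable_of_distF_nonpos hc hT⟩
    exact mem_of_reachable_sgRestrict (S := {z | distF G F r z ≤ 0}) h (distF_self r).le
  · simp only [not_exists] at hex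
    simp_rw [graftDist_eq_zero_of_forall_not_isMinJoin hex, le_refl, iff_true]
    exact (hc r x).mono fun _ _ h => ⟨h, trivial, trivial⟩

theorem stmt_18_general (G : SimpleGraph V) (T : Set V) (hc : G.Connected)
    (r : V) (K₀ : Set V)
    (hK₀ : K₀ = {u | (sgRestrict G {x | graftDist G T r x ≤ 0}).Reachable r u})
    (hTK : T ⊆ K₀) :
    (∀ x y : V, graftDist G T r x ≤ 0 → graftDist G T r y ≤ 0 →
      (sgRestrict G {z | graftDist G T r z ≤ 0}).Reachable x y) ∧
    K₀ = {x | graftDist G T r x ≤ 0} := by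
  subst hK₀
  have hreach := reachable_sgRestrict_iff_graftDist_nonpos hc hTK
  exact ⟨fun x y hx hy => ((hreach x).mpr hx).symm.trans ((hreach y).mpr hy), Set.ext hreach⟩

/-- let `(G, T)` be a connected graft with `T ≠ ∅`, `r ∈ V(G)`, and `K₀`
the connected component of `r` in the subgraph induced on `L(0) = {x : dist(r, x) ≤ 0}`.
If `T ⊆ K₀`, then the subgraph induced on `L(0)` is connected (hence equals `K₀`). -/
theorem stmt_18 (G : SimpleGraph V) (T : Set V) (hG : IsGraft G T) (hc : G.Connected)
    (hT : T.Nonempty) (r : V) (K₀ : Set V)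
    (hK₀ : K₀ = {u | (sgRestrict G {x | graftDist G T r x ≤ 0}).Reachable r u})
    (hTK : T ⊆ K₀) :
    (∀ x y : V, graftDist G T r x ≤ 0 → graftDist G T r y ≤ 0 →
      (sgRestrict G {z | graftDist G T r z ≤ 0}).Reachable x y) ∧
    K₀ = {x | graftDist G T r x ≤ 0} :=
  stmt_18_general G T hc r K₀ hK₀ hTK
end
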